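/- In the setting of the 4n-dimensional model space T = E⊗H with the algebraic conformal-Killing operator 𝒯(γ⊗α)(X) = (4/5)γ(X)α + (1/5)γ∧i_X α − (1/(4n−3))X∧i_γ α, the double ω_H-contraction composed with ω_E-contraction of 𝒯(γ₀⊗α₀) applied to γ₀⊗α₀ (γ₀, α₀ as in the paper), then fully contracted with ω_E once more, yields 𝒯_{HE}(γ₀α₀) = (8n(2n+1)/(5(4n−3))) h⊗e₂, which is nonzero for n ≥ 2. -/

import Mathlib

open scoped BigOperators TensorProduct

/-- wedge of two vectors in the exterior algebra -/
noncomputable def wedge2 {T : Type*} [AddCommGroup T] [Module ℂ T] (x₁ x₂ : T) :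
    ExteriorAlgebra ℂ T :=
  ExteriorAlgebra.ι ℂ x₁ * ExteriorAlgebra.ι ℂ x₂

/-- wedge of three vectors in the exterior algebra -/
noncomputable def wedge3 {T : Type*} [AddCommGroup T] [Module ℂ T] (x₁ x₂ x₃ : T) :
    ExteriorAlgebra ℂ T :=
  ExteriorAlgebra.ι ℂ x₁ * ExteriorAlgebra.ι ℂ x₂ * ExteriorAlgebra.ι ℂ x₃

/-- wedge of four vectors in the exterior algebra -/
noncomputable def wedge4 {T : Type*} [AddCommGroup T] [Module ℂ T] (x₁ x₂ x₃ x₄ : T) :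
    ExteriorAlgebra ℂ T :=
  ExteriorAlgebra.ι ℂ x₁ * ExteriorAlgebra.ι ℂ x₂ * ExteriorAlgebra.ι ℂ x₃ *
    ExteriorAlgebra.ι ℂ x₄

/-- the element `α₀ = e₁h∧e₂h∧Σᵢ eᵢh̃∧ẽᵢh̃ − e₁h̃∧e₂h̃∧Σᵢ eᵢh∧ẽᵢh` -/
noncomputable def alpha0 (n : ℕ) (hn : 2 ≤ n) {E H : Type*}
    [AddCommGroup E] [Module ℂ E] [AddCommGroup H] [Module ℂ H]
    (e te : Fin n ⊕ Fin n → E) (h th : H) : ExteriorAlgebra ℂ (E ⊗[ℂ] H) :=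
  (∑ i : Fin n ⊕ Fin n,
      wedge4 (e (Sum.inl ⟨0, by omega⟩) ⊗ₜ h) (e (Sum.inl ⟨1, by omega⟩) ⊗ₜ h)
        (e i ⊗ₜ th) (te i ⊗ₜ th))
  - ∑ i : Fin n ⊕ Fin n,
      wedge4 (e (Sum.inl ⟨0, by omega⟩) ⊗ₜ th) (e (Sum.inl ⟨1, by omega⟩) ⊗ₜ th)
        (e i ⊗ₜ h) (te i ⊗ₜ h)

/-- the value `𝒯(γ₀⊗α₀)(X) = (4/5)⟨γ₀,X⟩α₀ + (1/5)γ₀∧i_Xα₀ − (1/(4n−3))X∧i_{γ₀}α₀` -/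
noncomputable def Tcal (n : ℕ) {E H : Type*}
    [AddCommGroup E] [Module ℂ E] [AddCommGroup H] [Module ℂ H]
    (B : E ⊗[ℂ] H →ₗ[ℂ] E ⊗[ℂ] H →ₗ[ℂ] ℂ)
    (ic : E ⊗[ℂ] H →ₗ[ℂ]
      ExteriorAlgebra ℂ (E ⊗[ℂ] H) →ₗ[ℂ] ExteriorAlgebra ℂ (E ⊗[ℂ] H))
    (γ0 : E ⊗[ℂ] H) (α0 : ExteriorAlgebra ℂ (E ⊗[ℂ] H)) (X : E ⊗[ℂ] H) :
    ExteriorAlgebra ℂ (E ⊗[ℂ] H) :=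
  ((4 : ℂ)/5) • (B γ0 X • α0) + ((1 : ℂ)/5) • (ExteriorAlgebra.ι ℂ γ0 * ic X α0)
    - ((1 : ℂ)/(4*n - 3)) • (ExteriorAlgebra.ι ℂ X * ic γ0 α0)

/-- the 1-form `𝒯(γ₀⊗α₀)` as an element of `T ⊗ Λ⁴T` via the metric duality
(the dual basis of `{eᵢ⊗h, eᵢ⊗h̃}` is `{ẽᵢ⊗h̃, −ẽᵢ⊗h}`) -/
noncomputable def Xi (n : ℕ) {E H : Type*}
    [AddCommGroup E] [Module ℂ E] [AddCommGroup H] [Module ℂ H]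
    (e te : Fin n ⊕ Fin n → E) (h th : H)
    (B : E ⊗[ℂ] H →ₗ[ℂ] E ⊗[ℂ] H →ₗ[ℂ] ℂ)
    (ic : E ⊗[ℂ] H →ₗ[ℂ]
      ExteriorAlgebra ℂ (E ⊗[ℂ] H) →ₗ[ℂ] ExteriorAlgebra ℂ (E ⊗[ℂ] H))
    (γ0 : E ⊗[ℂ] H) (α0 : ExteriorAlgebra ℂ (E ⊗[ℂ] H)) :
    (E ⊗[ℂ] H) ⊗[ℂ] ExteriorAlgebra ℂ (E ⊗[ℂ] H) :=
  ∑ i : Fin n ⊕ Fin n,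
    ((te i ⊗ₜ th) ⊗ₜ Tcal n B ic γ0 α0 (e i ⊗ₜ h)
      - (te i ⊗ₜ h) ⊗ₜ Tcal n B ic γ0 α0 (e i ⊗ₜ th))

/-!
Pairing `𝒯(γ₀⊗α₀) = (4/5)B(γ₀,·)α₀ + (1/5)γ₀∧i_·α₀ − (1/(4n−3))·∧i_{γ₀}α₀` with the dual
basis splits `𝒯_{HE}(γ₀α₀)` into three contractions. In the first, the dual-basis identity
`Σ ẽᵢh̃ ⊗ B(γ₀, eᵢh) − ẽᵢh ⊗ B(γ₀, eᵢh̃) = γ₀` leaves the contraction of `γ₀ ⊗ α₀` itself.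
Each contraction is then a Gram computation in the unitary frame, where the sums over the frame
inside `α₀` produce the factors of `n`: the three terms are `4n`, `−12n` and `−4n` times `h⊗e₂`,
and `16n/5 − 12n/5 + 4n/(4n−3) = 8n(2n+1)/(5(4n−3))`. Finally `h⊗e₂` is nonzero, being a
vector of the tensor-product basis.
-/

open TensorProduct Finset

theorem wedge3_neg_right {T : Type*} [AddCommGroup T] [Module ℂ T] (x₁ x₂ x₃ : T) :
    wedge3 x₁ x₂ (-x₃) = -wedge3 x₁ x₂ x₃ := by
  simp [wedge3]

theorem wedge4_neg_right {T : Type*} [AddCommGroup T] [Module ℂ T] (x₁ x₂ x₃ x₄ : T) :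
    wedge4 x₁ x₂ x₃ (-x₄) = -wedge4 x₁ x₂ x₃ x₄ := by
  simp [wedge4]

theorem ι_mul_wedge3 {T : Type*} [AddCommGroup T] [Module ℂ T] (x₁ x₂ x₃ x₄ : T) :
    ExteriorAlgebra.ι ℂ x₁ * wedge3 x₂ x₃ x₄ = wedge4 x₁ x₂ x₃ x₄ := by
  simp only [wedge3, wedge4, mul_assoc]

theorem four_mul_sub_three_ne_zero {n : ℕ} (hn : 1 ≤ n) : (4 * n - 3 : ℂ) ≠ 0 := by
  have hcast : ((4 * n - 3 : ℕ) : ℂ) = 4 * n - 3 := by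
    push_cast [Nat.cast_sub (by omega : 3 ≤ 4 * n)]
    ring
  rw [← hcast]
  exact_mod_cast (by omega : 4 * n - 3 ≠ 0)

section Contraction

variable {E H : Type*} [AddCommGroup E] [Module ℂ E] [AddCommGroup H] [Module ℂ H]
  (ωE : E →ₗ[ℂ] E →ₗ[ℂ] ℂ) (ωH : H →ₗ[ℂ] H →ₗ[ℂ] ℂ)

noncomputable def contractPair (a : E) (w : H) (a₁ : E) (c₁ : H) (a₂ : E) (c₂ : H) :
    H ⊗[ℂ] E :=
  (ωH w c₁ * ωE a a₁) • (c₂ ⊗ₜ a₂) - (ωH w c₂ * ωE a a₂) • (c₁ ⊗ₜ a₁)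

noncomputable def contractSplit (a : E) (c : H) (a₁ : E) (c₁ : H) (a₂ : E) (c₂ : H)
    (a₃ : E) (c₃ : H) (a₄ : E) (c₄ : H) : H ⊗[ℂ] E :=
  ωE a₁ a₂ • (ωH c c₁ • contractPair ωE ωH a c₂ a₃ c₃ a₄ c₄
    + ωH c c₂ • contractPair ωE ωH a c₁ a₃ c₃ a₄ c₄)

/-- Each `contractSplit` term is one pair of slots contracted by `ω_E•`, followed by the
`ω_H`-contraction of `c` with either slot of that pair; `contractPair` is the remaining
`ω_H`/`ω_E`-contraction against the other two slots. -/
structure IsContractionHE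
    (Φ : (E ⊗[ℂ] H) ⊗[ℂ] ExteriorAlgebra ℂ (E ⊗[ℂ] H) →ₗ[ℂ] H ⊗[ℂ] E) : Prop where
  tmul_wedge4 : ∀ (a : E) (c : H) (a₁ a₂ a₃ a₄ : E) (c₁ c₂ c₃ c₄ : H),
    Φ ((a ⊗ₜ c) ⊗ₜ wedge4 (a₁ ⊗ₜ c₁) (a₂ ⊗ₜ c₂) (a₃ ⊗ₜ c₃) (a₄ ⊗ₜ c₄))
      = contractSplit ωE ωH a c a₁ c₁ a₂ c₂ a₃ c₃ a₄ c₄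
        - contractSplit ωE ωH a c a₁ c₁ a₃ c₃ a₂ c₂ a₄ c₄
        + contractSplit ωE ωH a c a₁ c₁ a₄ c₄ a₂ c₂ a₃ c₃
        + contractSplit ωE ωH a c a₂ c₂ a₃ c₃ a₁ c₁ a₄ c₄
        - contractSplit ωE ωH a c a₂ c₂ a₄ c₄ a₁ c₁ a₃ c₃
        + contractSplit ωE ωH a c a₃ c₃ a₄ c₄ a₁ c₁ a₂ c₂

theorem isContractionHE_comp_lTensor
    (C4 : ExteriorAlgebra ℂ (E ⊗[ℂ] H) →ₗ[ℂ]
      H ⊗[ℂ] (H ⊗[ℂ] ExteriorAlgebra ℂ (E ⊗[ℂ] H)))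
    (hC4 : ∀ (a₁ a₂ a₃ a₄ : E) (c₁ c₂ c₃ c₄ : H),
      C4 (wedge4 (a₁ ⊗ₜ c₁) (a₂ ⊗ₜ c₂) (a₃ ⊗ₜ c₃) (a₄ ⊗ₜ c₄))
        = ωE a₁ a₂ • (c₁ ⊗ₜ (c₂ ⊗ₜ wedge2 (a₃ ⊗ₜ c₃) (a₄ ⊗ₜ c₄))
            + c₂ ⊗ₜ (c₁ ⊗ₜ wedge2 (a₃ ⊗ₜ c₃) (a₄ ⊗ₜ c₄)))
        - ωE a₁ a₃ • (c₁ ⊗ₜ (c₃ ⊗ₜ wedge2 (a₂ ⊗ₜ c₂) (a₄ ⊗ₜ c₄))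
            + c₃ ⊗ₜ (c₁ ⊗ₜ wedge2 (a₂ ⊗ₜ c₂) (a₄ ⊗ₜ c₄)))
        + ωE a₁ a₄ • (c₁ ⊗ₜ (c₄ ⊗ₜ wedge2 (a₂ ⊗ₜ c₂) (a₃ ⊗ₜ c₃))
            + c₄ ⊗ₜ (c₁ ⊗ₜ wedge2 (a₂ ⊗ₜ c₂) (a₃ ⊗ₜ c₃)))
        + ωE a₂ a₃ • (c₂ ⊗ₜ (c₃ ⊗ₜ wedge2 (a₁ ⊗ₜ c₁) (a₄ ⊗ₜ c₄))
            + c₃ ⊗ₜ (c₂ ⊗ₜ wedge2 (a₁ ⊗ₜ c₁) (a₄ ⊗ₜ c₄)))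
        - ωE a₂ a₄ • (c₂ ⊗ₜ (c₄ ⊗ₜ wedge2 (a₁ ⊗ₜ c₁) (a₃ ⊗ₜ c₃))
            + c₄ ⊗ₜ (c₂ ⊗ₜ wedge2 (a₁ ⊗ₜ c₁) (a₃ ⊗ₜ c₃)))
        + ωE a₃ a₄ • (c₃ ⊗ₜ (c₄ ⊗ₜ wedge2 (a₁ ⊗ₜ c₁) (a₂ ⊗ₜ c₂))
            + c₄ ⊗ₜ (c₃ ⊗ₜ wedge2 (a₁ ⊗ₜ c₁) (a₂ ⊗ₜ c₂))))
    (D1 : (E ⊗[ℂ] H) ⊗[ℂ] (H ⊗[ℂ] (H ⊗[ℂ] ExteriorAlgebra ℂ (E ⊗[ℂ] H))) →ₗ[ℂ]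
      E ⊗[ℂ] (H ⊗[ℂ] ExteriorAlgebra ℂ (E ⊗[ℂ] H)))
    (hD1 : ∀ (a : E) (c c₁ c₂ : H) (z : ExteriorAlgebra ℂ (E ⊗[ℂ] H)),
      D1 ((a ⊗ₜ c) ⊗ₜ (c₁ ⊗ₜ (c₂ ⊗ₜ z))) = ωH c c₁ • (a ⊗ₜ (c₂ ⊗ₜ z)))
    (D2 : E ⊗[ℂ] (H ⊗[ℂ] ExteriorAlgebra ℂ (E ⊗[ℂ] H)) →ₗ[ℂ]
      H ⊗[ℂ] (E ⊗[ℂ] (E ⊗[ℂ] E)))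
    (hD2 : ∀ (a : E) (c' : H) (b₁ b₂ : E) (d₁ d₂ : H),
      D2 (a ⊗ₜ (c' ⊗ₜ wedge2 (b₁ ⊗ₜ d₁) (b₂ ⊗ₜ d₂)))
        = ωH c' d₁ • (d₂ ⊗ₜ (a ⊗ₜ (b₁ ⊗ₜ b₂)))
          - ωH c' d₂ • (d₁ ⊗ₜ (a ⊗ₜ (b₂ ⊗ₜ b₁))))
    (D3 : H ⊗[ℂ] (E ⊗[ℂ] (E ⊗[ℂ] E)) →ₗ[ℂ] H ⊗[ℂ] E)
    (hD3 : ∀ (d : H) (a b₁ b₂ : E),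
      D3 (d ⊗ₜ (a ⊗ₜ (b₁ ⊗ₜ b₂))) = ωE a b₁ • (d ⊗ₜ b₂)) :
    IsContractionHE ωE ωH (D3 ∘ₗ D2 ∘ₗ D1 ∘ₗ C4.lTensor (E ⊗[ℂ] H)) := by
  refine ⟨fun a c a₁ a₂ a₃ a₄ c₁ c₂ c₃ c₄ ↦ ?_⟩
  simp only [LinearMap.comp_apply, LinearMap.lTensor_tmul, hC4, tmul_add, tmul_sub, tmul_smul,
    map_add, map_sub, map_smul, hD1, hD2, hD3, contractSplit, contractPair, smul_sub,
    smul_add, smul_smul, mul_assoc]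

end Contraction

section Frame

variable {n : ℕ} {E H : Type*} [AddCommGroup E] [Module ℂ E] [AddCommGroup H] [Module ℂ H]

/-- `te i` is the paper's `ẽᵢ = j_E eᵢ`; `e (Sum.inr i)` is `e_{n+i}`. -/
structure IsUnitaryFrame (ωE : E →ₗ[ℂ] E →ₗ[ℂ] ℂ) (e te : Fin n ⊕ Fin n → E) : Prop where
  te_inl : ∀ i, te (Sum.inl i) = e (Sum.inr i)
  te_inr : ∀ i, te (Sum.inr i) = -e (Sum.inl i)
  pairing : ∀ i j, ωE (e i) (te j) = if i = j then 1 else 0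

namespace IsUnitaryFrame

variable {ωE : E →ₗ[ℂ] E →ₗ[ℂ] ℂ} {e te : Fin n ⊕ Fin n → E}

theorem omega_inl_inl (hf : IsUnitaryFrame ωE e te) (a b : Fin n) :
    ωE (e (Sum.inl a)) (e (Sum.inl b)) = 0 := by
  rw [← neg_neg (e (Sum.inl b)), ← hf.te_inr, map_neg, hf.pairing]
  simp

theorem omega_inl_inr (hf : IsUnitaryFrame ωE e te) (a b : Fin n) :
    ωE (e (Sum.inl a)) (e (Sum.inr b)) = if a = b then 1 else 0 := by
  rw [← hf.te_inl b, hf.pairing]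
  simp

theorem omega_inr_inl (hf : IsUnitaryFrame ωE e te) (a b : Fin n) :
    ωE (e (Sum.inr a)) (e (Sum.inl b)) = -if a = b then 1 else 0 := by
  rw [← neg_neg (e (Sum.inl b)), ← hf.te_inr, map_neg, hf.pairing]
  simp

theorem omega_inr_inr (hf : IsUnitaryFrame ωE e te) (a b : Fin n) :
    ωE (e (Sum.inr a)) (e (Sum.inr b)) = 0 := by
  rw [← hf.te_inl b, hf.pairing]
  simp

end IsUnitaryFrame

structure IsSymplecticPair (ωH : H →ₗ[ℂ] H →ₗ[ℂ] ℂ) (h th : H) : Prop where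
  apply_h_th : ωH h th = 1
  apply_th_h : ωH th h = -1
  apply_h_h : ωH h h = 0
  apply_th_th : ωH th th = 0

structure IsProductForm (ωE : E →ₗ[ℂ] E →ₗ[ℂ] ℂ) (ωH : H →ₗ[ℂ] H →ₗ[ℂ] ℂ)
    (B : E ⊗[ℂ] H →ₗ[ℂ] E ⊗[ℂ] H →ₗ[ℂ] ℂ) : Prop where
  tmul_tmul : ∀ (a b : E) (c d : H), B (a ⊗ₜ c) (b ⊗ₜ d) = ωE a b * ωH c d

structure IsInteriorProduct (B : E ⊗[ℂ] H →ₗ[ℂ] E ⊗[ℂ] H →ₗ[ℂ] ℂ)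
    (ic : E ⊗[ℂ] H →ₗ[ℂ]
      ExteriorAlgebra ℂ (E ⊗[ℂ] H) →ₗ[ℂ] ExteriorAlgebra ℂ (E ⊗[ℂ] H)) : Prop where
  apply_wedge4 : ∀ γ x₁ x₂ x₃ x₄ : E ⊗[ℂ] H,
    ic γ (wedge4 x₁ x₂ x₃ x₄)
      = B γ x₁ • wedge3 x₂ x₃ x₄ - B γ x₂ • wedge3 x₁ x₃ x₄
        + B γ x₃ • wedge3 x₁ x₂ x₄ - B γ x₄ • wedge3 x₁ x₂ x₃

end Frame

section Computation

variable {n : ℕ} {E H : Type*} [AddCommGroup E] [Module ℂ E] [AddCommGroup H] [Module ℂ H]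
  {ωE : E →ₗ[ℂ] E →ₗ[ℂ] ℂ} {ωH : H →ₗ[ℂ] H →ₗ[ℂ] ℂ} {e te : Fin n ⊕ Fin n → E} {h th : H}
  {B : E ⊗[ℂ] H →ₗ[ℂ] E ⊗[ℂ] H →ₗ[ℂ] ℂ}
  {ic : E ⊗[ℂ] H →ₗ[ℂ] ExteriorAlgebra ℂ (E ⊗[ℂ] H) →ₗ[ℂ] ExteriorAlgebra ℂ (E ⊗[ℂ] H)}
  {Φ : (E ⊗[ℂ] H) ⊗[ℂ] ExteriorAlgebra ℂ (E ⊗[ℂ] H) →ₗ[ℂ] H ⊗[ℂ] E}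

variable (e te h th) in
noncomputable def dualSum (f : E ⊗[ℂ] H → ExteriorAlgebra ℂ (E ⊗[ℂ] H)) :
    (E ⊗[ℂ] H) ⊗[ℂ] ExteriorAlgebra ℂ (E ⊗[ℂ] H) :=
  ∑ i, ((te i ⊗ₜ th) ⊗ₜ f (e i ⊗ₜ h) - (te i ⊗ₜ h) ⊗ₜ f (e i ⊗ₜ th))

theorem xi_eq_dualSum (γ : E ⊗[ℂ] H) (α : ExteriorAlgebra ℂ (E ⊗[ℂ] H)) :
    Xi n e te h th B ic γ α
      = (4 / 5 : ℂ) • dualSum e te h th (fun X ↦ B γ X • α)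
        + (1 / 5 : ℂ) • dualSum e te h th (fun X ↦ ExteriorAlgebra.ι ℂ γ * ic X α)
        - (1 / (4 * n - 3) : ℂ) • dualSum e te h th (fun X ↦ ExteriorAlgebra.ι ℂ X * ic γ α) := by
  simp only [Xi, dualSum, Tcal, smul_sum, ← sum_add_distrib, ← sum_sub_distrib]
  refine sum_congr rfl fun i _ ↦ ?_
  simp only [tmul_add, tmul_sub, tmul_smul]
  module

theorem dualSum_pairing_smul (hf : IsUnitaryFrame ωE e te) (hH : IsSymplecticPair ωH h th)
    (hB : IsProductForm ωE ωH B) (k : Fin n) (α : ExteriorAlgebra ℂ (E ⊗[ℂ] H)) :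
    dualSum e te h th (fun X ↦ B (te (Sum.inl k) ⊗ₜ h) X • α) = (te (Sum.inl k) ⊗ₜ h) ⊗ₜ α := by
  simp only [dualSum, Fintype.sum_sum_type, hf.te_inl, hf.te_inr, hB.tmul_tmul,
    hf.omega_inr_inl, hf.omega_inr_inr, hH.apply_h_th, hH.apply_h_h]
  simp [tmul_neg, tmul_ite]

theorem contractionHE_gamma0_alpha0 (hn : 2 ≤ n) (hf : IsUnitaryFrame ωE e te)
    (hH : IsSymplecticPair ωH h th) (hΦ : IsContractionHE ωE ωH Φ) :
    Φ ((te (Sum.inl ⟨0, by omega⟩) ⊗ₜ h) ⊗ₜ alpha0 n hn e te h th)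
      = (4 * n : ℂ) • (h ⊗ₜ e (Sum.inl ⟨1, by omega⟩)) := by
  simp only [alpha0, Fintype.sum_sum_type, hf.te_inl, hf.te_inr, neg_tmul, wedge4_neg_right,
    sum_neg_distrib, tmul_sub, tmul_add, tmul_neg, tmul_sum, map_sub, map_add, map_neg, map_sum,
    hΦ.tmul_wedge4]
  simp only [contractSplit, contractPair, hf.omega_inl_inl, hf.omega_inl_inr, hf.omega_inr_inl,
    hf.omega_inr_inr, hH.apply_h_th, hH.apply_th_h, hH.apply_h_h, hH.apply_th_th]
  simp only [mul_neg, mul_ite, mul_one, mul_zero, neg_smul, ite_smul, one_smul, zero_smul,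
    sub_zero, smul_neg, smul_ite, smul_zero, ite_self, neg_zero, add_zero, Fin.mk.injEq,
    zero_ne_one, ↓reduceIte, sub_self, sub_neg_eq_add, zero_add, neg_neg, smul_add,
    sum_add_distrib, sum_sub_distrib, sum_ite_eq, mem_univ, one_ne_zero, sum_const, card_univ,
    Fintype.card_fin, zero_sub, sum_neg_distrib, neg_add_rev]
  module

theorem ic_gamma0_alpha0 (hn : 2 ≤ n) (hf : IsUnitaryFrame ωE e te)
    (hH : IsSymplecticPair ωH h th) (hB : IsProductForm ωE ωH B) (hic : IsInteriorProduct B ic) :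
    ic (te (Sum.inl ⟨0, by omega⟩) ⊗ₜ h) (alpha0 n hn e te h th)
      = -(2 : ℂ) • wedge3 (e (Sum.inl ⟨0, by omega⟩) ⊗ₜ h) (e (Sum.inl ⟨1, by omega⟩) ⊗ₜ h)
          (te (Sum.inl ⟨0, by omega⟩) ⊗ₜ th)
        + ∑ i, wedge3 (e (Sum.inl ⟨1, by omega⟩) ⊗ₜ th) (e i ⊗ₜ h) (te i ⊗ₜ h) := by
  simp only [alpha0, Fintype.sum_sum_type, hf.te_inl, hf.te_inr, neg_tmul, wedge4_neg_right,
    wedge3_neg_right, sum_neg_distrib, map_sub, map_add, map_neg, map_sum, hic.apply_wedge4,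
    hB.tmul_tmul]
  simp only [hf.omega_inr_inl, hf.omega_inr_inr, hH.apply_h_th, hH.apply_h_h]
  simp only [↓reduceIte, mul_zero, zero_smul, Fin.mk.injEq, zero_ne_one, neg_zero, sub_self,
    mul_one, neg_smul, ite_smul, one_smul, zero_add, sub_zero, sum_neg_distrib, sum_ite_eq,
    mem_univ, add_zero, sub_neg_eq_add, neg_neg]
  module

theorem contractionHE_dualSum_gamma0_wedge_ic (hn : 2 ≤ n) (hf : IsUnitaryFrame ωE e te)
    (hH : IsSymplecticPair ωH h th) (hB : IsProductForm ωE ωH B) (hic : IsInteriorProduct B ic)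
    (hΦ : IsContractionHE ωE ωH Φ) :
    Φ (dualSum e te h th (fun X ↦ ExteriorAlgebra.ι ℂ (te (Sum.inl ⟨0, by omega⟩) ⊗ₜ h) *
        ic X (alpha0 n hn e te h th)))
      = -(12 * n : ℂ) • (h ⊗ₜ e (Sum.inl ⟨1, by omega⟩)) := by
  simp only [dualSum, alpha0, Fintype.sum_sum_type, hf.te_inl, hf.te_inr, neg_tmul,
    wedge4_neg_right, mul_add, mul_sub, mul_neg, mul_sum, mul_smul_comm, ι_mul_wedge3, tmul_add,
    tmul_sum, tmul_smul, sum_neg_distrib, tmul_sub, tmul_neg, map_sub, map_add, map_neg, map_sum,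
    map_smul, hic.apply_wedge4, hB.tmul_tmul, hΦ.tmul_wedge4]
  simp only [contractSplit, contractPair, hf.omega_inl_inl, hf.omega_inl_inr, hf.omega_inr_inl,
    hf.omega_inr_inr, hH.apply_h_th, hH.apply_th_h, hH.apply_h_h, hH.apply_th_th]
  simp only [mul_zero, Fin.mk.injEq, zero_ne_one, ↓reduceIte, neg_zero, mul_neg, mul_ite, mul_one,
    neg_smul, ite_smul, one_smul, zero_smul, sub_zero, smul_neg, smul_ite, smul_zero, smul_add,
    ite_self, add_zero, neg_neg, sub_self, sub_neg_eq_add, zero_add, zero_sub, neg_add_rev,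
    sum_add_distrib, sum_neg_distrib, sum_ite_irrel, sum_ite_eq, mem_univ, sum_const_zero,
    sum_sub_distrib, sum_ite_eq', one_ne_zero, sum_const, card_univ, Fintype.card_fin, neg_sub]
  module

theorem contractionHE_dualSum_wedge_ic_gamma0 (hn : 2 ≤ n) (hf : IsUnitaryFrame ωE e te)
    (hH : IsSymplecticPair ωH h th) (hB : IsProductForm ωE ωH B) (hic : IsInteriorProduct B ic)
    (hΦ : IsContractionHE ωE ωH Φ) :
    Φ (dualSum e te h th (fun X ↦ ExteriorAlgebra.ι ℂ X *
        ic (te (Sum.inl ⟨0, by omega⟩) ⊗ₜ h) (alpha0 n hn e te h th)))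
      = -(4 * n : ℂ) • (h ⊗ₜ e (Sum.inl ⟨1, by omega⟩)) := by
  rw [ic_gamma0_alpha0 hn hf hH hB hic]
  simp only [dualSum, Fintype.sum_sum_type, hf.te_inl, hf.te_inr, neg_tmul, wedge3_neg_right,
    mul_add, mul_neg, mul_sum, mul_smul_comm, ι_mul_wedge3, tmul_add, tmul_sum, tmul_smul,
    sum_neg_distrib, tmul_neg, map_sub, map_add, map_neg, map_sum, map_smul, hΦ.tmul_wedge4]
  simp only [contractSplit, contractPair, hf.omega_inl_inl, hf.omega_inl_inr, hf.omega_inr_inl,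
    hf.omega_inr_inr, hH.apply_h_th, hH.apply_th_h, hH.apply_h_h, hH.apply_th_th]
  simp only [mul_neg, mul_ite, mul_one, mul_zero, ite_self, neg_zero, zero_smul, sub_self,
    smul_zero, add_zero, neg_smul, ite_smul, one_smul, sub_neg_eq_add, smul_add, smul_neg,
    smul_ite, neg_neg, zero_add, ↓reduceIte, Fin.mk.injEq, one_ne_zero, smul_sub, sub_zero,
    sum_add_distrib, sum_sub_distrib, sum_neg_distrib, sum_ite_irrel, sum_ite_eq, mem_univ,
    sum_const_zero, sum_const, card_univ, Fintype.card_fin, zero_sub, neg_add_rev,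
    sum_ite_eq', add_sub_add_right_eq_sub, add_add_neg_add_cancel, neg_sub, zero_ne_one]
  module

theorem contractionHE_xi (hn : 2 ≤ n) (hf : IsUnitaryFrame ωE e te)
    (hH : IsSymplecticPair ωH h th) (hB : IsProductForm ωE ωH B) (hic : IsInteriorProduct B ic)
    (hΦ : IsContractionHE ωE ωH Φ) :
    Φ (Xi n e te h th B ic (te (Sum.inl ⟨0, by omega⟩) ⊗ₜ h) (alpha0 n hn e te h th))
      = ((8 * n * (2 * n + 1) : ℂ) / (5 * (4 * n - 3))) • (h ⊗ₜ e (Sum.inl ⟨1, by omega⟩)) := by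
  rw [xi_eq_dualSum, map_sub, map_add, map_smul, map_smul, map_smul,
    dualSum_pairing_smul hf hH hB, contractionHE_gamma0_alpha0 hn hf hH hΦ,
    contractionHE_dualSum_gamma0_wedge_ic hn hf hH hB hic hΦ,
    contractionHE_dualSum_wedge_ic_gamma0 hn hf hH hB hic hΦ, smul_smul, smul_smul, smul_smul,
    ← add_smul, ← sub_smul]
  have h43 := four_mul_sub_three_ne_zero (by omega : 1 ≤ n)
  congr 1
  field_simp
  ring

end Computation

/-- `𝒯_{HE}(γ₀α₀) = (8n(2n+1)/(5(4n−3))) h⊗e₂ ≠ 0` — the composition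
of the `ω_E`-contraction `Λ⁴T → S²H⊗Λ²T` (`C4`), the two `ω_H`-contractions in the
first two `H`-variables (`D1`, `D2`) and the final `ω_E`-contraction in the first
two `E`-variables (`D3`), applied to `𝒯(γ₀⊗α₀) ∈ T⊗Λ⁴T`. -/
theorem statement_12
    (n : ℕ) (hn : 2 ≤ n)
    (E H : Type*) [AddCommGroup E] [Module ℂ E] [AddCommGroup H] [Module ℂ H]
    (ωE : E →ₗ[ℂ] E →ₗ[ℂ] ℂ)
    (ωH : H →ₗ[ℂ] H →ₗ[ℂ] ℂ) (hωHskew : ∀ u v : H, ωH u v = - ωH v u)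
    (e te : Fin n ⊕ Fin n → E)
    (hte1 : ∀ i : Fin n, te (Sum.inl i) = e (Sum.inr i))
    (hte2 : ∀ i : Fin n, te (Sum.inr i) = - e (Sum.inl i))
    (hunit : ∀ i j : Fin n ⊕ Fin n, ωE (e i) (te j) = if i = j then 1 else 0)
    (h th : H) (hH1 : ωH h th = 1) (hH2 : ωH h h = 0) (hH3 : ωH th th = 0)
    -- bases (for the nonvanishing conclusion)
    (bE : Module.Basis (Fin n ⊕ Fin n) ℂ E) (hbE : ∀ i, bE i = e i)
    (bH : Module.Basis (Fin 2) ℂ H) (hbH0 : bH 0 = h)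
    -- the metric on T = E⊗H and the interior contraction
    (B : E ⊗[ℂ] H →ₗ[ℂ] E ⊗[ℂ] H →ₗ[ℂ] ℂ)
    (hB : ∀ (a b : E) (c d : H), B (a ⊗ₜ c) (b ⊗ₜ d) = ωE a b * ωH c d)
    (ic : E ⊗[ℂ] H →ₗ[ℂ]
      ExteriorAlgebra ℂ (E ⊗[ℂ] H) →ₗ[ℂ] ExteriorAlgebra ℂ (E ⊗[ℂ] H))
    (hic : ∀ γ x₁ x₂ x₃ x₄ : E ⊗[ℂ] H,
      ic γ (wedge4 x₁ x₂ x₃ x₄)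
        = B γ x₁ • wedge3 x₂ x₃ x₄ - B γ x₂ • wedge3 x₁ x₃ x₄
          + B γ x₃ • wedge3 x₁ x₂ x₄ - B γ x₄ • wedge3 x₁ x₂ x₃)
    -- the contraction ω_E• : Λ⁴(E⊗H) → S²H ⊗ Λ²(E⊗H)
    (C4 : ExteriorAlgebra ℂ (E ⊗[ℂ] H) →ₗ[ℂ]
      H ⊗[ℂ] (H ⊗[ℂ] ExteriorAlgebra ℂ (E ⊗[ℂ] H)))
    (hC4 : ∀ (a₁ a₂ a₃ a₄ : E) (c₁ c₂ c₃ c₄ : H),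
      C4 (wedge4 (a₁ ⊗ₜ c₁) (a₂ ⊗ₜ c₂) (a₃ ⊗ₜ c₃) (a₄ ⊗ₜ c₄))
        = ωE a₁ a₂ • (c₁ ⊗ₜ (c₂ ⊗ₜ wedge2 (a₃ ⊗ₜ c₃) (a₄ ⊗ₜ c₄))
            + c₂ ⊗ₜ (c₁ ⊗ₜ wedge2 (a₃ ⊗ₜ c₃) (a₄ ⊗ₜ c₄)))
        - ωE a₁ a₃ • (c₁ ⊗ₜ (c₃ ⊗ₜ wedge2 (a₂ ⊗ₜ c₂) (a₄ ⊗ₜ c₄))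
            + c₃ ⊗ₜ (c₁ ⊗ₜ wedge2 (a₂ ⊗ₜ c₂) (a₄ ⊗ₜ c₄)))
        + ωE a₁ a₄ • (c₁ ⊗ₜ (c₄ ⊗ₜ wedge2 (a₂ ⊗ₜ c₂) (a₃ ⊗ₜ c₃))
            + c₄ ⊗ₜ (c₁ ⊗ₜ wedge2 (a₂ ⊗ₜ c₂) (a₃ ⊗ₜ c₃)))
        + ωE a₂ a₃ • (c₂ ⊗ₜ (c₃ ⊗ₜ wedge2 (a₁ ⊗ₜ c₁) (a₄ ⊗ₜ c₄))
            + c₃ ⊗ₜ (c₂ ⊗ₜ wedge2 (a₁ ⊗ₜ c₁) (a₄ ⊗ₜ c₄)))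
        - ωE a₂ a₄ • (c₂ ⊗ₜ (c₄ ⊗ₜ wedge2 (a₁ ⊗ₜ c₁) (a₃ ⊗ₜ c₃))
            + c₄ ⊗ₜ (c₂ ⊗ₜ wedge2 (a₁ ⊗ₜ c₁) (a₃ ⊗ₜ c₃)))
        + ωE a₃ a₄ • (c₃ ⊗ₜ (c₄ ⊗ₜ wedge2 (a₁ ⊗ₜ c₁) (a₂ ⊗ₜ c₂))
            + c₄ ⊗ₜ (c₃ ⊗ₜ wedge2 (a₁ ⊗ₜ c₁) (a₂ ⊗ₜ c₂))))
    -- first ω_H-contraction (form slot against the first H of S²H)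
    (D1 : (E ⊗[ℂ] H) ⊗[ℂ] (H ⊗[ℂ] (H ⊗[ℂ] ExteriorAlgebra ℂ (E ⊗[ℂ] H))) →ₗ[ℂ]
      E ⊗[ℂ] (H ⊗[ℂ] ExteriorAlgebra ℂ (E ⊗[ℂ] H)))
    (hD1 : ∀ (a : E) (c c₁ c₂ : H) (z : ExteriorAlgebra ℂ (E ⊗[ℂ] H)),
      D1 ((a ⊗ₜ c) ⊗ₜ (c₁ ⊗ₜ (c₂ ⊗ₜ z))) = ωH c c₁ • (a ⊗ₜ (c₂ ⊗ₜ z)))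
    -- second ω_H-contraction, after expanding Λ²(E⊗H) ⊂ HHEE; result in H⊗E⊗E⊗E
    (D2 : E ⊗[ℂ] (H ⊗[ℂ] ExteriorAlgebra ℂ (E ⊗[ℂ] H)) →ₗ[ℂ]
      H ⊗[ℂ] (E ⊗[ℂ] (E ⊗[ℂ] E)))
    (hD2 : ∀ (a : E) (c' : H) (b₁ b₂ : E) (d₁ d₂ : H),
      D2 (a ⊗ₜ (c' ⊗ₜ wedge2 (b₁ ⊗ₜ d₁) (b₂ ⊗ₜ d₂)))
        = ωH c' d₁ • (d₂ ⊗ₜ (a ⊗ₜ (b₁ ⊗ₜ b₂)))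
          - ωH c' d₂ • (d₁ ⊗ₜ (a ⊗ₜ (b₂ ⊗ₜ b₁))))
    -- final ω_E-contraction in the first two E-variables
    (D3 : H ⊗[ℂ] (E ⊗[ℂ] (E ⊗[ℂ] E)) →ₗ[ℂ] H ⊗[ℂ] E)
    (hD3 : ∀ (d : H) (a b₁ b₂ : E),
      D3 (d ⊗ₜ (a ⊗ₜ (b₁ ⊗ₜ b₂))) = ωE a b₁ • (d ⊗ₜ b₂)) :
    D3 (D2 (D1 ((LinearMap.lTensor (E ⊗[ℂ] H) C4)
        (Xi n e te h th B ic (te (Sum.inl ⟨0, by omega⟩) ⊗ₜ h)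
          (alpha0 n hn e te h th)))))
      = ((8*n*(2*n+1) : ℂ) / (5*(4*n - 3))) • (h ⊗ₜ e (Sum.inl ⟨1, by omega⟩))
    ∧ D3 (D2 (D1 ((LinearMap.lTensor (E ⊗[ℂ] H) C4)
        (Xi n e te h th B ic (te (Sum.inl ⟨0, by omega⟩) ⊗ₜ h)
          (alpha0 n hn e te h th))))) ≠ 0 := by
  have hvalue := contractionHE_xi hn ⟨hte1, hte2, hunit⟩ ⟨hH1, by rw [hωHskew, hH1], hH2, hH3⟩
    ⟨hB⟩ ⟨hic⟩ (isContractionHE_comp_lTensor ωE ωH C4 hC4 D1 hD1 D2 hD2 D3 hD3)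
  simp only [LinearMap.comp_apply] at hvalue
  refine ⟨hvalue, ?_⟩
  rw [hvalue]
  refine smul_ne_zero ?_ ?_
  · have hn0 : (n : ℂ) ≠ 0 := by exact_mod_cast (by omega : n ≠ 0)
    have h2n1 : (2 * n + 1 : ℂ) ≠ 0 := by exact_mod_cast (by omega : 2 * n + 1 ≠ 0)
    exact div_ne_zero (mul_ne_zero (mul_ne_zero (by norm_num) hn0) h2n1)
      (mul_ne_zero (by norm_num) (four_mul_sub_three_ne_zero (by omega)))
  · rw [← hbH0, ← hbE, ← Module.Basis.tensorProduct_apply]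
    exact Module.Basis.ne_zero _ _
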